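/- Let $\Lambda \subset \mathbb{R}^2$ be an infinite sector of opening angle $\theta \in (0, \pi)$. Then for every $\varepsilon > 0$ and every $v \in W^{1,2}(\Lambda)$: $\int_{\partial\Lambda} |v|^2\, d\sigma \leq \varepsilon \int_\Lambda |\nabla v|^2\, dx + \frac{C_\theta}{\varepsilon} \int_\Lambda |v|^2\, dx$ with $C_\theta = \frac{2}{1 - \cos\theta}$. -/

import Mathlib

/-!
Bisect the sector by the ray of angle `θ/2`, with unit direction `n`. Each half is the image of
the open quadrant under `(s, t) ↦ s • e + t • n`, where `e` is a unit vector along one edge, and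
this linear map has Jacobian `sin (θ/2)`. Along each ray `t ↦ s • e + t • n` the one-dimensional
inequality `f 0 ^ 2 = -∫ (f ^ 2)' ≤ ∫ (b f' ^ 2 + f ^ 2 / b)` holds, since `f ^ 2` is integrable
and so tends to `0`. Integrating over `s` and using `|∂ₙ v| ≤ |∇ v|` gives
`sin (θ/2) * (boundary integral) ≤ b ∫ |∇ v|² + (1/b) ∫ v²`; then take `b = ε sin (θ/2)` and use
`sin (θ/2) ^ 2 = (1 - cos θ) / 2`.
-/

open MeasureTheory Set Filter Topology Real

theorem abs_two_mul_mul_le {b : ℝ} (hb : 0 < b) (x y : ℝ) :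
    |2 * (x * y)| ≤ b * y ^ 2 + x ^ 2 / b := by
  have h₁ : b * y ^ 2 + x ^ 2 / b - 2 * (x * y) = (b * y - x) ^ 2 / b := by
    field_simp; ring
  have h₂ : b * y ^ 2 + x ^ 2 / b + 2 * (x * y) = (b * y + x) ^ 2 / b := by
    field_simp; ring
  have h₃ : 0 ≤ (b * y - x) ^ 2 / b := by positivity
  have h₄ : 0 ≤ (b * y + x) ^ 2 / b := by positivity
  exact abs_le.2 ⟨by linarith, by linarith⟩

theorem sq_le_integral_Ioi {f f' : ℝ → ℝ} {b : ℝ} (hb : 0 < b)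
    (hc : ContinuousWithinAt f (Ici 0) 0) (hd : ∀ t ∈ Ioi (0 : ℝ), HasDerivAt f (f' t) t)
    (hf : IntegrableOn (fun t => f t ^ 2) (Ioi 0))
    (hf' : IntegrableOn (fun t => f' t ^ 2) (Ioi 0)) :
    f 0 ^ 2 ≤ ∫ t in Ioi (0 : ℝ), (b * f' t ^ 2 + f t ^ 2 / b) := by
  have hd_sq : ∀ t ∈ Ioi (0 : ℝ), HasDerivAt (fun t => f t ^ 2) (2 * (f t * f' t)) t :=
    fun t ht => by simpa [mul_assoc] using (hd t ht).fun_pow 2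
  have hfm : AEStronglyMeasurable f (volume.restrict (Ioi 0)) :=
    ContinuousOn.aestronglyMeasurable (fun t ht => (hd t ht).continuousAt.continuousWithinAt)
      measurableSet_Ioi
  have hf'm : AEStronglyMeasurable f' (volume.restrict (Ioi 0)) :=
    (measurable_deriv f).aestronglyMeasurable.congr <|
      (ae_restrict_iff' measurableSet_Ioi).2 (ae_of_all _ fun t ht => (hd t ht).deriv)
  have hG : IntegrableOn (fun t => b * f' t ^ 2 + f t ^ 2 / b) (Ioi 0) :=
    (hf'.const_mul b).add (hf.div_const b)
  have hG' : IntegrableOn (fun t => 2 * (f t * f' t)) (Ioi 0) :=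
    hG.mono' ((hfm.mul hf'm).const_mul 2) (ae_of_all _ fun t => abs_two_mul_mul_le hb _ _)
  have h_int : ∫ t in Ioi 0, 2 * (f t * f' t) = 0 - f 0 ^ 2 :=
    integral_Ioi_of_hasDerivAt_of_tendsto (hc.pow 2) hd_sq hG'
      (tendsto_zero_of_hasDerivAt_of_integrableOn_Ioi hd_sq hG' hf)
  calc f 0 ^ 2 = ∫ t in Ioi 0, -(2 * (f t * f' t)) := by rw [integral_neg, h_int]; ring
    _ ≤ _ := integral_mono hG'.neg hG fun t => (neg_le_abs _).trans (abs_two_mul_mul_le hb _ _)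

section ChangeOfVariables

variable {E : Type*} [NormedAddCommGroup E] [NormedSpace ℝ E] [FiniteDimensional ℝ E]
  {L : E →L[ℝ] E}

theorem ContinuousLinearMap.injective_of_det_ne_zero (hL : L.det ≠ 0) : Function.Injective L :=
  (Module.End.isUnit_iff (L : E →ₗ[ℝ] E)).1
    ((LinearMap.isUnit_iff_isUnit_det _).2 (Ne.isUnit hL)) |>.1

variable [MeasurableSpace E] [BorelSpace E] (μ : Measure E) [μ.IsAddHaarMeasure] {s : Set E}

theorem ContinuousLinearMap.setIntegral_image (hL : L.det ≠ 0) (hs : MeasurableSet s)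
    (g : E → ℝ) : ∫ x in L '' s, g x ∂μ = |L.det| * ∫ x in s, g (L x) ∂μ := by
  rw [integral_image_eq_integral_abs_det_fderiv_smul μ hs
    (fun x _ => L.hasFDerivAt.hasFDerivWithinAt) (L.injective_of_det_ne_zero hL).injOn g]
  simp only [smul_eq_mul, integral_const_mul]

theorem ContinuousLinearMap.integrableOn_image_iff (hL : L.det ≠ 0) (hs : MeasurableSet s)
    (g : E → ℝ) : IntegrableOn g (L '' s) μ ↔ IntegrableOn (fun x => g (L x)) s μ := by
  rw [integrableOn_image_iff_integrableOn_abs_det_fderiv_smul μ hs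
    (fun x _ => L.hasFDerivAt.hasFDerivWithinAt) (L.injective_of_det_ne_zero hL).injOn g]
  exact integrable_fun_smul_iff (abs_ne_zero.2 hL) _

end ChangeOfVariables

def cross (u v : ℝ × ℝ) : ℝ := u.1 * v.2 - u.2 * v.1

theorem cross_smul_add_smul (e n u : ℝ × ℝ) (s t : ℝ) :
    cross (s • e + t • n) u = s * cross e u + t * cross n u := by
  simp only [cross, Prod.fst_add, Prod.snd_add, Prod.smul_fst, Prod.smul_snd, smul_eq_mul]
  ring

theorem cross_cos_sin (α β : ℝ) : cross (cos α, sin α) (cos β, sin β) = sin (β - α) := by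
  rw [cross, sin_sub]; ring

noncomputable def wedgeMap (e n : ℝ × ℝ) : ℝ × ℝ →L[ℝ] ℝ × ℝ :=
  LinearMap.toContinuousLinearMap
    (Matrix.toLin (Module.Basis.finTwoProd ℝ) (Module.Basis.finTwoProd ℝ) !![e.1, n.1; e.2, n.2])

theorem wedgeMap_apply (e n p : ℝ × ℝ) : wedgeMap e n p = p.1 • e + p.2 • n := by
  simp [wedgeMap, Matrix.toLin_finTwoProd_apply, Prod.ext_iff, mul_comm]

theorem det_wedgeMap (e n : ℝ × ℝ) : (wedgeMap e n).det = cross e n := by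
  rw [ContinuousLinearMap.det, wedgeMap, LinearMap.coe_toContinuousLinearMap, LinearMap.det_toLin,
    Matrix.det_fin_two_of, cross]
  ring

def wedge (e n : ℝ × ℝ) : Set (ℝ × ℝ) := wedgeMap e n '' (Ioi 0 ×ˢ Ioi 0)

section Wedge

variable {e n : ℝ × ℝ}

theorem smul_add_smul_mem_wedge {s t : ℝ} (hs : 0 < s) (ht : 0 < t) :
    s • e + t • n ∈ wedge e n :=
  ⟨(s, t), ⟨hs, ht⟩, wedgeMap_apply e n (s, t)⟩

theorem smul_mem_closure_wedge {s : ℝ} (hs : 0 < s) : s • e ∈ closure (wedge e n) := by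
  have h : Tendsto (fun t : ℝ => s • e + t • n) (𝓝[>] 0) (𝓝 (s • e)) := by
    have : Continuous (fun t : ℝ => s • e + t • n) := by fun_prop
    simpa using (this.tendsto 0).mono_left nhdsWithin_le_nhds
  exact mem_closure_of_tendsto h (eventually_mem_nhdsWithin.mono fun t ht =>
    smul_add_smul_mem_wedge hs ht)

theorem measurableSet_wedge (h : cross e n ≠ 0) : MeasurableSet (wedge e n) :=
  (measurableSet_Ioi.prod measurableSet_Ioi).image_of_continuousOn_injOn
    (wedgeMap e n).continuous.continuousOn
    ((wedgeMap e n).injective_of_det_ne_zero (by rwa [det_wedgeMap])).injOn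

theorem volume_restrict_Ioi_prod_Ioi :
    (volume : Measure (ℝ × ℝ)).restrict (Ioi 0 ×ˢ Ioi 0)
      = (volume.restrict (Ioi 0)).prod (volume.restrict (Ioi 0)) :=
  (Measure.prod_restrict _ _).symm

theorem integrable_prod_of_integrableOn_wedge (h : cross e n ≠ 0) {g : ℝ × ℝ → ℝ}
    (hg : IntegrableOn g (wedge e n)) :
    Integrable (fun p : ℝ × ℝ => g (p.1 • e + p.2 • n))
      ((volume.restrict (Ioi 0)).prod (volume.restrict (Ioi 0))) := by
  rw [← det_wedgeMap] at h
  have := ((wedgeMap e n).integrableOn_image_iff volume h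
    (measurableSet_Ioi.prod measurableSet_Ioi) g).1 hg
  simpa only [IntegrableOn, volume_restrict_Ioi_prod_Ioi, wedgeMap_apply] using this

theorem setIntegral_wedge (h : cross e n ≠ 0) {g : ℝ × ℝ → ℝ}
    (hg : IntegrableOn g (wedge e n)) :
    ∫ x in wedge e n, g x
      = |cross e n| * ∫ s in Ioi (0 : ℝ), ∫ t in Ioi (0 : ℝ), g (s • e + t • n) := by
  rw [wedge, (wedgeMap e n).setIntegral_image volume (by rwa [det_wedgeMap])
    (measurableSet_Ioi.prod measurableSet_Ioi), det_wedgeMap, volume_restrict_Ioi_prod_Ioi,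
    ← integral_prod _ (integrable_prod_of_integrableOn_wedge h hg)]
  simp only [wedgeMap_apply]

theorem disjoint_wedge {e₁ e₂ n : ℝ × ℝ} (h₁ : 0 < cross e₁ n) (h₂ : cross e₂ n < 0) :
    Disjoint (wedge e₁ n) (wedge e₂ n) := by
  rw [Set.disjoint_left]
  rintro _ ⟨⟨s, t⟩, ⟨hs, -⟩, rfl⟩ ⟨⟨s', t'⟩, ⟨hs', -⟩, h⟩
  have h' := congrArg (fun p => cross p n) h
  have hn : cross n n = 0 := by rw [cross]; ring
  simp only [wedgeMap_apply, cross_smul_add_smul, hn, mul_zero, add_zero] at h'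
  nlinarith [mul_pos hs h₁, mul_neg_of_pos_of_neg hs' h₂]

end Wedge

section Trace

variable {e n : ℝ × ℝ} {v : ℝ × ℝ → ℝ} {b : ℝ}

theorem sq_le_integral_ray (hb : 0 < b) (hvc : ContinuousOn v (closure (wedge e n)))
    (hvd : ∀ x ∈ wedge e n, DifferentiableAt ℝ v x) {s : ℝ} (hs : 0 < s)
    (hv : IntegrableOn (fun t => v (s • e + t • n) ^ 2) (Ioi (0 : ℝ)))
    (hDv : IntegrableOn (fun t => fderiv ℝ v (s • e + t • n) n ^ 2) (Ioi (0 : ℝ))) :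
    v (s • e) ^ 2 ≤ ∫ t in Ioi (0 : ℝ),
      (b * fderiv ℝ v (s • e + t • n) n ^ 2 + v (s • e + t • n) ^ 2 / b) := by
  have hline : ∀ t : ℝ, HasDerivAt (fun t : ℝ => s • e + t • n) n t := fun t => by
    simpa using ((hasDerivAt_id t).smul_const n).const_add (s • e)
  have hmaps : MapsTo (fun t : ℝ => s • e + t • n) (Ici 0) (closure (wedge e n)) := by
    intro t ht
    rcases (mem_Ici.1 ht).eq_or_lt with rfl | ht
    · simpa using smul_mem_closure_wedge hs
    · exact subset_closure (smul_add_smul_mem_wedge hs ht)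
  have hc : ContinuousWithinAt (fun t : ℝ => v (s • e + t • n)) (Ici 0) 0 :=
    (hvc _ (hmaps self_mem_Ici)).comp (f := fun t : ℝ => s • e + t • n)
      (hline 0).continuousAt.continuousWithinAt hmaps
  simpa only [zero_smul, add_zero] using sq_le_integral_Ioi hb hc
    (fun t ht => (hvd _ (smul_add_smul_mem_wedge hs ht)).hasFDerivAt.comp_hasDerivAt t (hline t))
    hv hDv

theorem mul_integral_Ioi_sq_le_setIntegral_wedge (h : cross e n ≠ 0) (hb : 0 < b)
    (hvc : ContinuousOn v (closure (wedge e n))) (hvd : ∀ x ∈ wedge e n, DifferentiableAt ℝ v x)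
    (hv : IntegrableOn (fun x => v x ^ 2) (wedge e n))
    (hDv : IntegrableOn (fun x => fderiv ℝ v x n ^ 2) (wedge e n)) :
    |cross e n| * ∫ s in Ioi (0 : ℝ), v (s • e) ^ 2
      ≤ ∫ x in wedge e n, (b * fderiv ℝ v x n ^ 2 + v x ^ 2 / b) := by
  have hg : IntegrableOn (fun x => b * fderiv ℝ v x n ^ 2 + v x ^ 2 / b) (wedge e n) :=
    (hDv.const_mul b).add (hv.div_const b)
  rw [setIntegral_wedge h hg]
  have hbound : ∀ᵐ s ∂volume.restrict (Ioi (0 : ℝ)), v (s • e) ^ 2 ≤ ∫ t in Ioi (0 : ℝ),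
      (b * fderiv ℝ v (s • e + t • n) n ^ 2 + v (s • e + t • n) ^ 2 / b) := by
    filter_upwards [(integrable_prod_of_integrableOn_wedge h hv).prod_right_ae,
      (integrable_prod_of_integrableOn_wedge h hDv).prod_right_ae,
      ae_restrict_mem measurableSet_Ioi] with s hvs hDvs hs
    exact sq_le_integral_ray hb hvc hvd hs hvs hDvs
  have hG := (integrable_prod_of_integrableOn_wedge h hg).integral_prod_left
  have hcont : ContinuousOn (fun s : ℝ => v (s • e) ^ 2) (Ioi 0) :=
    (hvc.comp (continuous_id.smul continuous_const).continuousOn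
      fun s hs => smul_mem_closure_wedge hs).pow 2
  have hint : IntegrableOn (fun s : ℝ => v (s • e) ^ 2) (Ioi 0) :=
    hG.mono' (hcont.aestronglyMeasurable measurableSet_Ioi) <| by
      filter_upwards [hbound] with s hs
      rwa [Real.norm_of_nonneg (sq_nonneg _)]
  exact mul_le_mul_of_nonneg_left (integral_mono_ae hint hG hbound) (abs_nonneg _)

end Trace

theorem sq_apply_le_of_sq_add_sq_eq_one (L : ℝ × ℝ →L[ℝ] ℝ) {u : ℝ × ℝ}
    (hu : u.1 ^ 2 + u.2 ^ 2 = 1) : L u ^ 2 ≤ L (1, 0) ^ 2 + L (0, 1) ^ 2 := by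
  have hu' : u = u.1 • ((1 : ℝ), (0 : ℝ)) + u.2 • ((0 : ℝ), (1 : ℝ)) := by simp
  rw [hu', map_add, map_smul, map_smul, smul_eq_mul, smul_eq_mul]
  nlinarith [sq_nonneg (u.2 * L (1, 0) - u.1 * L (0, 1))]

theorem integrableOn_sq_fderiv_apply {v : ℝ × ℝ → ℝ} {s : Set (ℝ × ℝ)} {u : ℝ × ℝ}
    (hu : u.1 ^ 2 + u.2 ^ 2 = 1)
    (hDv : IntegrableOn (fun x => fderiv ℝ v x (1, 0) ^ 2 + fderiv ℝ v x (0, 1) ^ 2) s) :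
    IntegrableOn (fun x => fderiv ℝ v x u ^ 2) s :=
  hDv.mono' ((measurable_fderiv_apply_const ℝ v u).pow_const 2).aestronglyMeasurable
    (ae_of_all _ fun x => by
      rw [norm_of_nonneg (sq_nonneg _)]
      exact sq_apply_le_of_sq_add_sq_eq_one _ hu)

theorem setIntegral_mul_sq_fderiv_apply_add_sq_div_le {v : ℝ × ℝ → ℝ} {s : Set (ℝ × ℝ)}
    {u : ℝ × ℝ} {b : ℝ} (hb : 0 ≤ b) (hu : u.1 ^ 2 + u.2 ^ 2 = 1)
    (hv : IntegrableOn (fun x => v x ^ 2) s)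
    (hDv : IntegrableOn (fun x => fderiv ℝ v x (1, 0) ^ 2 + fderiv ℝ v x (0, 1) ^ 2) s) :
    ∫ x in s, (b * fderiv ℝ v x u ^ 2 + v x ^ 2 / b)
      ≤ b * (∫ x in s, (fderiv ℝ v x (1, 0) ^ 2 + fderiv ℝ v x (0, 1) ^ 2))
        + (∫ x in s, v x ^ 2) / b := by
  have hDu := integrableOn_sq_fderiv_apply hu hDv
  rw [integral_add (hDu.const_mul b) (hv.div_const b), integral_const_mul, integral_div]
  exact add_le_add_left (mul_le_mul_of_nonneg_left
    (integral_mono hDu hDv fun x => sq_apply_le_of_sq_add_sq_eq_one _ hu) hb) _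

def sector (θ : ℝ) : Set (ℝ × ℝ) :=
  {x | ∃ r φ : ℝ, 0 < r ∧ φ ∈ Ioo 0 θ ∧ x = (r * cos φ, r * sin φ)}

theorem mem_sector_of_cross_pos {θ : ℝ} (hθ : θ ∈ Ioo 0 π) {p : ℝ × ℝ}
    (h₁ : 0 < p.2) (h₂ : 0 < cross p (cos θ, sin θ)) : p ∈ sector θ := by
  set z : ℂ := ⟨p.1, p.2⟩
  have hcos : ‖z‖ * cos z.arg = p.1 := z.norm_mul_cos_arg
  have hsin : ‖z‖ * sin z.arg = p.2 := z.norm_mul_sin_arg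
  have hr : 0 < ‖z‖ := norm_pos_iff.2 fun h => by simp [z, Complex.ext_iff] at h; linarith
  have harg : 0 < z.arg := by
    by_contra! h
    nlinarith [sin_nonpos_of_nonpos_of_neg_pi_le h z.neg_pi_lt_arg.le]
  have harg' : z.arg < θ := by
    have h : ‖z‖ * sin (θ - z.arg) = cross p (cos θ, sin θ) := by
      rw [sin_sub, cross, ← hcos, ← hsin]; ring
    by_contra! h'
    nlinarith [sin_nonpos_of_nonpos_of_neg_pi_le (sub_nonpos.2 h')
      (by linarith [z.arg_le_pi, hθ.1])]
  exact ⟨‖z‖, z.arg, hr, ⟨harg, harg'⟩, by rw [hcos, hsin]⟩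

theorem wedge_subset_sector {θ α β : ℝ} (hθ : θ ∈ Ioo 0 π) (hα : α ∈ Icc 0 θ)
    (hβ : β ∈ Ioo 0 θ) : wedge (cos α, sin α) (cos β, sin β) ⊆ sector θ := by
  obtain ⟨hθ₀, hθπ⟩ := hθ
  rintro _ ⟨⟨s, t⟩, ⟨hs : 0 < s, ht : 0 < t⟩, rfl⟩
  have hα₁ : 0 ≤ sin α := sin_nonneg_of_nonneg_of_le_pi hα.1 (by linarith [hα.2])
  have hα₂ : 0 ≤ sin (θ - α) := sin_nonneg_of_nonneg_of_le_pi (by linarith [hα.2])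
    (by linarith [hα.1])
  have hβ₁ : 0 < sin β := sin_pos_of_pos_of_lt_pi hβ.1 (by linarith [hβ.2])
  have hβ₂ : 0 < sin (θ - β) := sin_pos_of_pos_of_lt_pi (by linarith [hβ.2]) (by linarith [hβ.1])
  refine mem_sector_of_cross_pos ⟨hθ₀, hθπ⟩ ?_ ?_
  · simp only [wedgeMap_apply, Prod.snd_add, Prod.smul_snd, smul_eq_mul]
    positivity
  · rw [wedgeMap_apply, cross_smul_add_smul, cross_cos_sin, cross_cos_sin]
    positivity

theorem sin_half_mul_boundary_integral_le {θ b : ℝ} (hθ : θ ∈ Ioo 0 π) (hb : 0 < b) {v : ℝ × ℝ → ℝ}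
    (hvc : ContinuousOn v (closure (sector θ))) (hvd : ∀ x ∈ sector θ, DifferentiableAt ℝ v x)
    (hv : IntegrableOn (fun x => v x ^ 2) (sector θ))
    (hDv : IntegrableOn (fun x => fderiv ℝ v x (1, 0) ^ 2 + fderiv ℝ v x (0, 1) ^ 2) (sector θ)) :
    sin (θ / 2) * ((∫ r in Ioi (0 : ℝ), v (r, 0) ^ 2)
        + ∫ r in Ioi (0 : ℝ), v (r * cos θ, r * sin θ) ^ 2)
      ≤ b * (∫ x in sector θ, (fderiv ℝ v x (1, 0) ^ 2 + fderiv ℝ v x (0, 1) ^ 2))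
        + (∫ x in sector θ, v x ^ 2) / b := by
  set n : ℝ × ℝ := (cos (θ / 2), sin (θ / 2))
  have hhalf : θ / 2 ∈ Ioo 0 θ := ⟨by linarith [hθ.1], by linarith [hθ.1]⟩
  have hs : 0 < sin (θ / 2) := sin_pos_of_pos_of_lt_pi hhalf.1 (hhalf.2.trans hθ.2)
  have hW₀ := wedge_subset_sector hθ (left_mem_Icc.2 hθ.1.le) hhalf
  have hWθ := wedge_subset_sector hθ (right_mem_Icc.2 hθ.1.le) hhalf
  have hc₀ : cross (cos 0, sin 0) n = sin (θ / 2) := by rw [cross_cos_sin, sub_zero]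
  have hcθ : cross (cos θ, sin θ) n = -sin (θ / 2) := by
    rw [cross_cos_sin, ← sin_neg]; ring_nf
  have hn : n.1 ^ 2 + n.2 ^ 2 = 1 := cos_sq_add_sin_sq _
  have hDn_int := integrableOn_sq_fderiv_apply hn hDv
  set g : ℝ × ℝ → ℝ := fun x => b * fderiv ℝ v x n ^ 2 + v x ^ 2 / b
  have hg : IntegrableOn g (sector θ) := (hDn_int.const_mul b).add (hv.div_const b)
  have h₀ := mul_integral_Ioi_sq_le_setIntegral_wedge (by rw [hc₀]; exact hs.ne') hb
    (hvc.mono (closure_mono hW₀)) (fun x hx => hvd x (hW₀ hx)) (hv.mono_set hW₀)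
    (hDn_int.mono_set hW₀)
  have hθ' := mul_integral_Ioi_sq_le_setIntegral_wedge
    (by rw [hcθ]; exact (neg_neg_of_pos hs).ne) hb
    (hvc.mono (closure_mono hWθ)) (fun x hx => hvd x (hWθ hx)) (hv.mono_set hWθ)
    (hDn_int.mono_set hWθ)
  rw [hc₀, abs_of_pos hs] at h₀
  rw [hcθ, abs_neg, abs_of_pos hs] at hθ'
  calc _ = sin (θ / 2) * ((∫ r in Ioi (0 : ℝ), v (r • (cos 0, sin 0)) ^ 2)
          + ∫ r in Ioi (0 : ℝ), v (r • (cos θ, sin θ)) ^ 2) := by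
        simp only [cos_zero, sin_zero, Prod.smul_mk, smul_eq_mul, mul_one, mul_zero]
    _ ≤ (∫ x in wedge (cos 0, sin 0) n, g x) + ∫ x in wedge (cos θ, sin θ) n, g x := by
        rw [mul_add]; exact add_le_add h₀ hθ'
    _ = ∫ x in wedge (cos 0, sin 0) n ∪ wedge (cos θ, sin θ) n, g x :=
        (setIntegral_union
          (disjoint_wedge (by rwa [hc₀]) (by rw [hcθ]; exact neg_neg_of_pos hs))
          (measurableSet_wedge (by rw [hcθ]; exact (neg_neg_of_pos hs).ne)) (hg.mono_set hW₀)
          (hg.mono_set hWθ)).symm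
    _ ≤ ∫ x in sector θ, g x :=
        setIntegral_mono_set hg (ae_of_all _ fun x => by positivity)
          (union_subset hW₀ hWθ).eventuallyLE
    _ ≤ _ := setIntegral_mul_sq_fderiv_apply_add_sq_div_le hb.le hn hv hDv

theorem stmt5 (θ : ℝ) (hθ : θ ∈ Ioo 0 Real.pi)
    (Λ : Set (ℝ × ℝ))
    (hΛ : Λ = {x : ℝ × ℝ | ∃ r φ : ℝ, 0 < r ∧ φ ∈ Ioo 0 θ ∧
        x = (r * Real.cos φ, r * Real.sin φ)})
    (ε : ℝ) (hε : 0 < ε) (v : ℝ × ℝ → ℝ)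
    (hvc : ContinuousOn v (closure Λ))
    (hvd : ∀ x ∈ Λ, DifferentiableAt ℝ v x)
    (hv2 : MemLp v 2 (volume.restrict Λ))
    (hg2 : IntegrableOn
      (fun x => (fderiv ℝ v x (1, 0)) ^ 2 + (fderiv ℝ v x (0, 1)) ^ 2) Λ) :
    (∫ r in Ioi (0:ℝ), (v (r, 0)) ^ 2)
      + (∫ r in Ioi (0:ℝ), (v (r * Real.cos θ, r * Real.sin θ)) ^ 2)
    ≤ ε * (∫ x in Λ, ((fderiv ℝ v x (1, 0)) ^ 2 + (fderiv ℝ v x (0, 1)) ^ 2))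
      + ((2 / (1 - Real.cos θ)) / ε) * ∫ x in Λ, (v x) ^ 2 := by
  have hΛ' : Λ = sector θ := hΛ
  subst hΛ'
  have hs : 0 < sin (θ / 2) :=
    sin_pos_of_pos_of_lt_pi (by linarith [hθ.1]) (by linarith [hθ.1, hθ.2])
  have hC : 2 / (1 - cos θ) = 1 / sin (θ / 2) ^ 2 := by
    rw [sin_sq_eq_half_sub, show 2 * (θ / 2) = θ by ring]
    field_simp
  have key := sin_half_mul_boundary_integral_le hθ (mul_pos hε hs) hvc hvd hv2.integrable_sq hg2
  rw [hC]
  calc _ ≤ _ := (le_div_iff₀' hs).2 key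
    _ = _ := by field_simp
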